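/- arXiv:2402.14160 — 5 statements merged into one kernel-verified Lean document; each statement's English description precedes it below -/
import Mathlib

section
/- Recursive rejection sampling recovers the target distribution: for every K ≥ 1, every target probability distribution q on 𝒳, and every family of conditional draft distributions p^(k)(·|x^(1:k−1)) (k = 1,…,K), the output Z of recursive rejection sampling satisfies Pr{Z = z} = q(z) for every z ∈ 𝒳, regardless of which fixed probability distribution is used for Norm of the identically-zero function. -/
open scoped BigOperators Classical

/-- A probability distribution on a finite alphabet. -/
def IsProbDist {X : Type*} [Fintype X] (p : X → ℝ) : Prop :=
  (∀ x, 0 ≤ p x) ∧ ∑ x, p x = 1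

/-- `Norm` with a default distribution `d`, used when `f` is identically zero. -/
noncomputable def normOr {X : Type*} [Fintype X] (d f : X → ℝ) : X → ℝ :=
  if ∀ x, f x = 0 then d else fun x => f x / ∑ x', f x'

/-- Acceptance probability `min {1, qv / pv}`, interpreted as `1` when `pv = 0`. -/
noncomputable def accProb (pv qv : ℝ) : ℝ :=
  if pv = 0 then 1 else min 1 (qv / pv)

/-- Residual distributions: `Qres K q pdraft d m` is `q^{(m+1)}` (it is fed the whole draft
tuple for convenience; it only depends on the first `m - 1` coordinates). -/
noncomputable def Qres {X : Type*} [Fintype X] (K : ℕ) (q : X → ℝ)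
    (pdraft : (k : Fin K) → (Fin (k : ℕ) → X) → X → ℝ) (d : X → ℝ) :
    ℕ → (Fin K → X) → X → ℝ
  | 0, _, t => q t
  | m + 1, x, t =>
    if hm : m < K then
      normOr d (fun s =>
        max 0 (Qres K q pdraft d m x s -
          pdraft ⟨m, hm⟩ (fun j => x (Fin.castLE hm.le j)) s)) t
    else d t

/-- Probability that the draft process produces the tuple `x` of draft tokens. -/
noncomputable def trajProb {X : Type*} [Fintype X] (K : ℕ)
    (pdraft : (k : Fin K) → (Fin (k : ℕ) → X) → X → ℝ) (x : Fin K → X) : ℝ :=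
  ∏ k : Fin K, pdraft k (fun j => x (Fin.castLE k.isLt.le j)) (x k)

/-- Conditional acceptance probability of the `m`-th draft (0-indexed), given the drafts. -/
noncomputable def thetaN {X : Type*} [Fintype X] (K : ℕ) (q : X → ℝ)
    (pdraft : (k : Fin K) → (Fin (k : ℕ) → X) → X → ℝ) (d : X → ℝ)
    (m : ℕ) (x : Fin K → X) : ℝ :=
  if hm : m < K then
    accProb (pdraft ⟨m, hm⟩ (fun j => x (Fin.castLE hm.le j)) (x ⟨m, hm⟩))
      (Qres K q pdraft d m x (x ⟨m, hm⟩))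
  else 0

/-- The law of the output `Z` of recursive rejection sampling: sum over draft tuples of the
probability of the tuple times the conditional probability that the output equals `z`
(first acceptance at round `k` outputs the `k`-th draft; if every draft is rejected the
output is drawn from the last residual distribution `q^{(K+1)}`). -/
noncomputable def rrsLaw {X : Type*} [Fintype X] (K : ℕ) (q : X → ℝ)
    (pdraft : (k : Fin K) → (Fin (k : ℕ) → X) → X → ℝ) (d : X → ℝ) (z : X) : ℝ :=
  ∑ x : Fin K → X, trajProb K pdraft x *
    ((∑ k : Fin K,
        (∏ j ∈ Finset.range (k : ℕ), (1 - thetaN K q pdraft d j x)) *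
          thetaN K q pdraft d (k : ℕ) x * (if x k = z then 1 else 0)) +
      (∏ j ∈ Finset.range K, (1 - thetaN K q pdraft d j x)) *
        Qres K q pdraft d K x z)

lemma normOr_isProbDist {X : Type*} [Fintype X] {d f : X → ℝ}
    (hd : IsProbDist d) (hf : ∀ x, 0 ≤ f x) : IsProbDist (normOr d f) := by
  unfold normOr
  split_ifs with h
  · exact hd
  · push_neg at h
    obtain ⟨x0, hx0⟩ := h
    have hs : 0 < ∑ x', f x' :=
      Finset.sum_pos' (fun i _ => hf i)
        ⟨x0, Finset.mem_univ _, lt_of_le_of_ne (hf x0) (Ne.symm hx0)⟩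
    refine ⟨fun x => div_nonneg (hf x) hs.le, ?_⟩
    rw [← Finset.sum_div, div_self hs.ne']

lemma mul_accProb (pa qa : ℝ) (hp : 0 ≤ pa) (hq : 0 ≤ qa) :
    pa * accProb pa qa = min pa qa := by
  unfold accProb
  split_ifs with h
  · simp [h, min_eq_left hq]
  · have hp' : 0 < pa := lt_of_le_of_ne hp (Ne.symm h)
    rw [mul_min_of_nonneg _ _ hp, mul_one, mul_div_cancel₀ _ h, min_comm]

lemma one_step {X : Type*} [Fintype X] (p q d : X → ℝ)
    (hp : IsProbDist p) (hq : IsProbDist q) (z : X) :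
    ∑ a, p a * (accProb (p a) (q a) * (if a = z then 1 else 0)
      + (1 - accProb (p a) (q a)) * normOr d (fun s => max 0 (q s - p s)) z) = q z := by
  have hmin : ∀ a, p a * accProb (p a) (q a) = min (p a) (q a) :=
    fun a => mul_accProb _ _ (hp.1 a) (hq.1 a)
  have hrej : ∀ a, p a * (1 - accProb (p a) (q a)) = max 0 (p a - q a) := by
    intro a
    have h1 := hmin a
    have : p a * (1 - accProb (p a) (q a)) = p a - min (p a) (q a) := by ring_nf; linarith [h1]
    rw [this]
    rcases le_total (p a) (q a) with h | h
    · rw [min_eq_left h]; simp; linarith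
    · rw [min_eq_right h]; rw [max_eq_right (by linarith)]
  have split : (∑ a, p a * (accProb (p a) (q a) * (if a = z then 1 else 0)
      + (1 - accProb (p a) (q a)) * normOr d (fun s => max 0 (q s - p s)) z))
      = (∑ a, min (p a) (q a) * (if a = z then 1 else 0))
        + (∑ a, max 0 (p a - q a)) * normOr d (fun s => max 0 (q s - p s)) z := by
    rw [Finset.sum_mul, ← Finset.sum_add_distrib]
    refine Finset.sum_congr rfl fun a _ => ?_
    rw [← hmin, ← hrej]; ring
  rw [split]
  have hfirst : (∑ a, min (p a) (q a) * (if a = z then 1 else 0)) = min (p z) (q z) := by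
    simp [mul_ite]
  have hbeta : (∑ a, max 0 (p a - q a)) = ∑ a, max 0 (q a - p a) := by
    have key : ∀ a, max 0 (p a - q a) - max 0 (q a - p a) = p a - q a := by
      intro a; rcases le_total (p a) (q a) with h | h
      · rw [max_eq_left (by linarith), max_eq_right (by linarith)]; ring
      · rw [max_eq_right (by linarith), max_eq_left (by linarith)]; ring
    have : (∑ a, max 0 (p a - q a)) - (∑ a, max 0 (q a - p a)) = 0 := by
      rw [← Finset.sum_sub_distrib]
      simp only [key]
      rw [Finset.sum_sub_distrib, hp.2, hq.2, sub_self]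
    linarith
  rw [hfirst, hbeta]
  by_cases h0 : ∀ s, max 0 (q s - p s) = 0
  · have hn : normOr d (fun s => max 0 (q s - p s)) = d := by unfold normOr; rw [if_pos h0]
    have hz : q z ≤ p z := by
      have := h0 z; by_contra hc; push_neg at hc
      rw [max_eq_right (by linarith)] at this; linarith
    rw [hn]
    have : (∑ a, max 0 (q a - p a)) = 0 := Finset.sum_eq_zero fun a _ => h0 a
    rw [this, min_eq_right hz]; ring
  · have hn : normOr d (fun s => max 0 (q s - p s))
        = fun x => max 0 (q x - p x) / ∑ s, max 0 (q s - p s) := by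
      unfold normOr; rw [if_neg h0]
    push_neg at h0
    obtain ⟨s0, hs0⟩ := h0
    have hs : 0 < ∑ s, max 0 (q s - p s) :=
      Finset.sum_pos' (fun i _ => le_max_left _ _)
        ⟨s0, Finset.mem_univ _, lt_of_le_of_ne (le_max_left _ _) (Ne.symm hs0)⟩
    rw [hn]
    have : (∑ a, max 0 (q a - p a)) * (max 0 (q z - p z) / ∑ s, max 0 (q s - p s))
        = max 0 (q z - p z) := by field_simp
    rw [this]
    rcases le_total (q z) (p z) with h | h
    · rw [min_eq_right h, max_eq_left (by linarith)]; ring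
    · rw [min_eq_left h, max_eq_right (by linarith)]; ring

lemma elim0_eq {X : Type*} (h : Fin 0 → X) : h = Fin.elim0 := by
  funext j; exact j.elim0

lemma pdraft_arg_eq {X : Type*} {K : ℕ} (pdraft : (k : Fin K) → (Fin (k : ℕ) → X) → X → ℝ)
    {i i' : Fin K} (h : i = i') {g : Fin ((i : ℕ)) → X} {g' : Fin ((i' : ℕ)) → X}
    (hg : HEq g g') : pdraft i g = pdraft i' g' := by
  subst h; rw [eq_of_heq hg]

lemma cons_prefix {X : Type*} {K m : ℕ} (h1 : m + 1 ≤ K + 1) (h2 : m ≤ K)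
    (a : X) (y : Fin K → X) :
    (fun j : Fin (m+1) => (Fin.cons a y : Fin (K+1) → X) (Fin.castLE h1 j))
      = (Fin.cons a (fun j : Fin m => y (Fin.castLE h2 j)) : Fin (m+1) → X) := by
  set g : Fin m → X := fun j => y (Fin.castLE h2 j) with hg
  funext j
  refine Fin.cases (motive := fun j => (Fin.cons a y : Fin (K+1) → X) (Fin.castLE h1 j)
    = (Fin.cons a g : Fin (m+1) → X) j) ?_ (fun i => ?_) j
  · exact (@Fin.cons_zero K (fun _ => X) a y).trans (@Fin.cons_zero m (fun _ => X) a g).symm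
  · exact (@Fin.cons_succ K (fun _ => X) a y (Fin.castLE h2 i)).trans
      (@Fin.cons_succ m (fun _ => X) a g i).symm

lemma Qres_shift {X : Type*} [Fintype X] (K : ℕ) (q : X → ℝ)
    (pdraft : (k : Fin (K+1)) → (Fin (k : ℕ) → X) → X → ℝ) (d : X → ℝ)
    (a : X) (y : Fin K → X) (m : ℕ) :
    Qres (K+1) q pdraft d (m+1) (Fin.cons a y)
      = Qres K (normOr d (fun s => max 0 (q s - pdraft 0 Fin.elim0 s)))
          (fun k h => pdraft k.succ (Fin.cons a h)) d m y := by
  induction m with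
  | zero =>
    funext t
    rw [Qres.eq_2, dif_pos (Nat.succ_pos K)]
    conv_rhs => rw [Qres.eq_1]
    refine congrArg (fun r => normOr d r t) ?_
    funext s
    rw [Qres.eq_1]
    refine congrArg (fun v => max 0 (q s - v)) ?_
    exact congrFun (pdraft_arg_eq pdraft Fin.mk_zero (heq_of_eq (elim0_eq _))) s
  | succ m ih =>
    funext t
    rw [Qres.eq_2, Qres.eq_2]
    by_cases hm : m < K
    · rw [dif_pos (Nat.succ_lt_succ hm), dif_pos hm]
      refine congrArg (fun r => normOr d r t) ?_
      funext s
      rw [ih]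
      refine congrArg (fun v => max 0 (Qres K (normOr d (fun s => max 0 (q s - pdraft 0 Fin.elim0 s)))
        (fun k h => pdraft k.succ (Fin.cons a h)) d m y s - v)) ?_
      exact congrFun (pdraft_arg_eq pdraft
        (i := ⟨m+1, Nat.succ_lt_succ hm⟩) (i' := Fin.succ ⟨m, hm⟩) rfl
        (heq_of_eq (cons_prefix (le_of_lt (Nat.succ_lt_succ hm)) (le_of_lt hm) a y))) s
    · rw [dif_neg (by omega : ¬ m + 1 < K + 1), dif_neg hm]

lemma thetaN_shift {X : Type*} [Fintype X] (K : ℕ) (q : X → ℝ)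
    (pdraft : (k : Fin (K+1)) → (Fin (k : ℕ) → X) → X → ℝ) (d : X → ℝ)
    (a : X) (y : Fin K → X) (m : ℕ) :
    thetaN (K+1) q pdraft d (m+1) (Fin.cons a y)
      = thetaN K (normOr d (fun s => max 0 (q s - pdraft 0 Fin.elim0 s)))
          (fun k h => pdraft k.succ (Fin.cons a h)) d m y := by
  unfold thetaN
  by_cases hm : m < K
  · rw [dif_pos (Nat.succ_lt_succ hm), dif_pos hm]
    have hc : (Fin.cons a y : Fin (K+1) → X) ⟨m+1, Nat.succ_lt_succ hm⟩ = y ⟨m, hm⟩ :=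
      @Fin.cons_succ K (fun _ => X) a y ⟨m, hm⟩
    rw [hc, Qres_shift K q pdraft d a y m]
    refine congrArg (fun v => accProb v (Qres K (normOr d (fun s => max 0 (q s - pdraft 0 Fin.elim0 s)))
      (fun k h => pdraft k.succ (Fin.cons a h)) d m y (y ⟨m, hm⟩))) ?_
    exact congrFun (pdraft_arg_eq pdraft
      (i := ⟨m+1, Nat.succ_lt_succ hm⟩) (i' := Fin.succ ⟨m, hm⟩) rfl
      (heq_of_eq (cons_prefix (le_of_lt (Nat.succ_lt_succ hm)) (le_of_lt hm) a y))) (y ⟨m, hm⟩)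
  · rw [dif_neg (by omega : ¬ m + 1 < K + 1), dif_neg hm]

lemma thetaN_zero {X : Type*} [Fintype X] (K : ℕ) (q : X → ℝ)
    (pdraft : (k : Fin (K+1)) → (Fin (k : ℕ) → X) → X → ℝ) (d : X → ℝ)
    (a : X) (y : Fin K → X) :
    thetaN (K+1) q pdraft d 0 (Fin.cons a y)
      = accProb (pdraft 0 Fin.elim0 a) (q a) := by
  unfold thetaN
  rw [dif_pos (Nat.succ_pos K)]
  have hc : (Fin.cons a y : Fin (K+1) → X) ⟨0, Nat.succ_pos K⟩ = a :=
    @Fin.cons_zero K (fun _ => X) a y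
  rw [Qres.eq_1, hc]
  refine congrArg (fun v => accProb v (q a)) ?_
  exact congrFun (pdraft_arg_eq pdraft Fin.mk_zero (heq_of_eq (elim0_eq _))) a

lemma trajProb_shift {X : Type*} [Fintype X] (K : ℕ)
    (pdraft : (k : Fin (K+1)) → (Fin (k : ℕ) → X) → X → ℝ)
    (a : X) (y : Fin K → X) :
    trajProb (K+1) pdraft (Fin.cons a y)
      = pdraft 0 Fin.elim0 a * trajProb K (fun k h => pdraft k.succ (Fin.cons a h)) y := by
  unfold trajProb
  rw [Fin.prod_univ_succ]
  refine congrArg₂ (· * ·) ?_ ?_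
  · have hc : (Fin.cons a y : Fin (K+1) → X) 0 = a := @Fin.cons_zero K (fun _ => X) a y
    rw [hc]
    exact congrFun (pdraft_arg_eq pdraft rfl (heq_of_eq (elim0_eq _))) a
  · refine Finset.prod_congr rfl fun k _ => ?_
    have hc : (Fin.cons a y : Fin (K+1) → X) k.succ = y k := @Fin.cons_succ K (fun _ => X) a y k
    rw [hc]
    exact congrFun (pdraft_arg_eq pdraft (i := k.succ) (i' := k.succ) rfl
      (heq_of_eq (cons_prefix (Nat.succ_le_succ (le_of_lt k.isLt)) (le_of_lt k.isLt) a y))) (y k)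

lemma sum_cons {X : Type*} [Fintype X] {K : ℕ} (F : (Fin (K+1) → X) → ℝ) :
    ∑ x : Fin (K+1) → X, F x = ∑ a : X, ∑ y : Fin K → X, F (Fin.cons a y) := by
  rw [← (Fin.consEquiv (fun _ : Fin (K+1) => X)).sum_comp F, Fintype.sum_prod_type]
  rfl

lemma trajProb_sum {X : Type*} [Fintype X] :
    ∀ (K : ℕ) (pdraft : (k : Fin K) → (Fin (k : ℕ) → X) → X → ℝ),
      (∀ k h, IsProbDist (pdraft k h)) → ∑ x : Fin K → X, trajProb K pdraft x = 1 := by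
  intro K
  induction K with
  | zero =>
    intro pdraft _
    simp [trajProb]
  | succ K ih =>
    intro pdraft hp
    rw [sum_cons]
    have key : ∀ a : X, ∑ y : Fin K → X, trajProb (K+1) pdraft (Fin.cons a y)
        = pdraft 0 Fin.elim0 a := by
      intro a
      simp only [trajProb_shift]
      rw [← Finset.mul_sum, ih _ (fun k h => hp k.succ (Fin.cons a h)), mul_one]
    simp only [key]
    exact (hp 0 Fin.elim0).2

lemma sum_step {I0 : Type*} [Fintype I0] (p0v t ind qz : ℝ) (T I : I0 → ℝ)
    (hT : ∑ y, T y = 1) (hI : ∑ y, T y * I y = qz) :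
    ∑ y, p0v * T y * (t * ind + (1 - t) * I y) = p0v * (t * ind + (1 - t) * qz) := by
  have expand : ∀ y, p0v * T y * (t * ind + (1 - t) * I y)
      = (p0v * (t * ind)) * T y + (p0v * (1 - t)) * (T y * I y) := fun y => by ring
  simp only [expand]
  rw [Finset.sum_add_distrib, ← Finset.mul_sum, ← Finset.mul_sum, hT, hI]
  ring

lemma rrs_general {X : Type*} [Fintype X] :
    ∀ (K : ℕ) (q : X → ℝ), IsProbDist q →
      ∀ (pdraft : (k : Fin K) → (Fin (k : ℕ) → X) → X → ℝ),
        (∀ k h, IsProbDist (pdraft k h)) →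
      ∀ (d : X → ℝ), IsProbDist d → ∀ z : X, rrsLaw K q pdraft d z = q z := by
  intro K
  induction K with
  | zero =>
    intro q hq pdraft hp d hd z
    unfold rrsLaw
    haveI : Unique (Fin 0 → X) := ⟨⟨fun i => i.elim0⟩, fun x => funext fun j => j.elim0⟩
    rw [Fintype.sum_unique]
    simp [trajProb, Qres.eq_1]
  | succ K ih =>
    intro q hq pdraft hp d hd z
    have hq' : IsProbDist (normOr d (fun s => max 0 (q s - pdraft 0 Fin.elim0 s))) :=
      normOr_isProbDist hd (fun s => le_max_left _ _)
    unfold rrsLaw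
    rw [sum_cons]
    have inner_eq : ∀ (a : X) (y : Fin K → X),
        ((∑ k : Fin (K+1),
            (∏ j ∈ Finset.range (k : ℕ), (1 - thetaN (K+1) q pdraft d j (Fin.cons a y))) *
              thetaN (K+1) q pdraft d (k : ℕ) (Fin.cons a y) *
              (if (Fin.cons a y : Fin (K+1) → X) k = z then 1 else 0)) +
          (∏ j ∈ Finset.range (K+1), (1 - thetaN (K+1) q pdraft d j (Fin.cons a y))) *
            Qres (K+1) q pdraft d (K+1) (Fin.cons a y) z)
        = accProb (pdraft 0 Fin.elim0 a) (q a) * (if a = z then 1 else 0)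
          + (1 - accProb (pdraft 0 Fin.elim0 a) (q a)) *
            ((∑ k : Fin K,
              (∏ j ∈ Finset.range (k : ℕ),
                (1 - thetaN K (normOr d (fun s => max 0 (q s - pdraft 0 Fin.elim0 s)))
                  (fun k h => pdraft k.succ (Fin.cons a h)) d j y)) *
                thetaN K (normOr d (fun s => max 0 (q s - pdraft 0 Fin.elim0 s)))
                  (fun k h => pdraft k.succ (Fin.cons a h)) d (k : ℕ) y *
                (if y k = z then 1 else 0)) +
              (∏ j ∈ Finset.range K,
                (1 - thetaN K (normOr d (fun s => max 0 (q s - pdraft 0 Fin.elim0 s)))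
                  (fun k h => pdraft k.succ (Fin.cons a h)) d j y)) *
                Qres K (normOr d (fun s => max 0 (q s - pdraft 0 Fin.elim0 s)))
                  (fun k h => pdraft k.succ (Fin.cons a h)) d K y z) := by
      intro a y
      rw [Fin.sum_univ_succ]
      simp only [Fin.val_zero, Finset.range_zero, Finset.prod_empty, one_mul, Fin.val_succ]
      rw [thetaN_zero K q pdraft d a y]
      rw [show (Fin.cons a y : Fin (K+1) → X) 0 = a from @Fin.cons_zero K (fun _ => X) a y]
      simp only [Finset.prod_range_succ']
      simp only [thetaN_shift K q pdraft d a y, thetaN_zero K q pdraft d a y]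
      simp only [@Fin.cons_succ K (fun _ => X) a y]
      rw [Qres_shift K q pdraft d a y K]
      rw [mul_add, Finset.mul_sum, add_assoc]
      congr 1
      congr 1
      · exact Finset.sum_congr rfl fun k _ => by ring
      · ring
    have step1 : ∀ a : X,
        (∑ y : Fin K → X, trajProb (K+1) pdraft (Fin.cons a y) *
          ((∑ k : Fin (K+1),
              (∏ j ∈ Finset.range (k : ℕ), (1 - thetaN (K+1) q pdraft d j (Fin.cons a y))) *
                thetaN (K+1) q pdraft d (k : ℕ) (Fin.cons a y) *
                (if (Fin.cons a y : Fin (K+1) → X) k = z then 1 else 0)) +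
            (∏ j ∈ Finset.range (K+1), (1 - thetaN (K+1) q pdraft d j (Fin.cons a y))) *
              Qres (K+1) q pdraft d (K+1) (Fin.cons a y) z))
        = pdraft 0 Fin.elim0 a * (accProb (pdraft 0 Fin.elim0 a) (q a) * (if a = z then 1 else 0)
            + (1 - accProb (pdraft 0 Fin.elim0 a) (q a)) *
              normOr d (fun s => max 0 (q s - pdraft 0 Fin.elim0 s)) z) := by
      intro a
      simp only [trajProb_shift K pdraft a, inner_eq a]
      exact sum_step _ _ _ _ _ _
        (trajProb_sum K _ (fun k h => hp k.succ (Fin.cons a h)))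
        (ih _ hq' _ (fun k h => hp k.succ (Fin.cons a h)) d hd z)
    trans (∑ a : X, pdraft 0 Fin.elim0 a *
      (accProb (pdraft 0 Fin.elim0 a) (q a) * (if a = z then 1 else 0)
        + (1 - accProb (pdraft 0 Fin.elim0 a) (q a)) *
          normOr d (fun s => max 0 (q s - pdraft 0 Fin.elim0 s)) z))
    · exact Finset.sum_congr rfl fun a _ => step1 a
    · exact one_step (pdraft 0 Fin.elim0) q d (hp 0 Fin.elim0) hq z

/-- **Recursive rejection sampling recovers the target distribution.** -/
theorem rrs_recovers_target {X : Type*} [Fintype X] [Nonempty X]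
    (K : ℕ) (hK : 1 ≤ K)
    (q : X → ℝ) (hq : IsProbDist q)
    (pdraft : (k : Fin K) → (Fin (k : ℕ) → X) → X → ℝ)
    (hp : ∀ (k : Fin K) (h : Fin (k : ℕ) → X), IsProbDist (pdraft k h))
    (d : X → ℝ) (hd : IsProbDist d)
    (z : X) :
    rrsLaw K q pdraft d z = q z := by
  exact rrs_general K q hq pdraft hp d hd z
end

section
/- On a binary alphabet, recursive rejection sampling with two draft tokens sampled without replacement achieves 100% acceptance: let 𝒳 = {0,1} and let p, q be probability distributions on 𝒳 with p ≠ q; run recursive rejection sampling with K = 2, p^(1) := p, and p^(2)(·|x) := the point mass at 1 − x. Then the probability that both draft tokens are rejected is 0 — indeed, conditionally on the first draft being rejected, the second draft is accepted with probability 1 — so the output Z equals an accepted draft token almost surely and Pr{Z = z} = q(z) for all z ∈ 𝒳. -/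
open scoped BigOperators Classical

/-- The draft kernels on the binary alphabet `Fin 2`: the first draft is drawn from `p`, and
the second draft is the point mass at `1 - x` where `x` is the first draft. -/
noncomputable def binDraft (p : Fin 2 → ℝ) :
    (k : Fin 2) → (Fin (k : ℕ) → Fin 2) → Fin 2 → ℝ :=
  fun k h y => if hk : 0 < (k : ℕ) then (if y = 1 - h ⟨0, hk⟩ then 1 else 0) else p y

/-! Since `p` and `q` have the same total mass and differ, exactly one token `t` has
`p t < q t`, so the residual `q^(2) = Norm[(q - p)⁺]` is the point mass at `t`. The first
draft can only be rejected when it is the other token `1 - t`; the second draft is then `t`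
itself, which `q^(2)` accepts surely. Hence the output law is `min(p, q) + (q - p)⁺ = q`. -/

lemma mul_accProb_s7 {a c : ℝ} (ha : 0 ≤ a) (hc : 0 ≤ c) : a * accProb a c = min a c := by
  rcases ha.eq_or_lt with rfl | ha
  · simp [accProb, hc]
  · rw [accProb, if_neg ha.ne', mul_min_of_nonneg _ _ ha.le, mul_one, mul_div_cancel₀ _ ha.ne']

lemma mul_one_sub_accProb {a c : ℝ} (ha : 0 ≤ a) (hc : 0 ≤ c) :
    a * (1 - accProb a c) = max 0 (a - c) := by
  rw [mul_sub, mul_one, mul_accProb_s7 ha hc]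
  rcases le_total a c with h | h <;> simp [h]

lemma accProb_eq_one_of_le {a c : ℝ} (ha : 0 ≤ a) (h : a ≤ c) : accProb a c = 1 := by
  rcases ha.eq_or_lt with rfl | ha
  · simp [accProb]
  · rw [accProb, if_neg ha.ne', min_eq_left ((one_le_div ha).2 h)]

lemma accProb_one_ite (P : Prop) [Decidable P] :
    accProb 1 (if P then 1 else 0) = if P then 1 else 0 := by
  split_ifs <;> norm_num [accProb]

lemma exists_lt_of_sum_eq_of_ne {ι M : Type*} [Fintype ι] [AddCommMonoid M] [LinearOrder M]
    [IsOrderedCancelAddMonoid M] {f g : ι → M} (h : ∑ i, f i = ∑ i, g i) (hfg : f ≠ g) :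
    ∃ i, f i < g i := by
  by_contra! hle
  exact hfg (funext fun i =>
    ((Finset.sum_eq_sum_iff_of_le fun i _ => hle i).1 h.symm i (Finset.mem_univ i)).symm)

lemma Fin.sub_eq_sub_one_sub_of_sum_eq {M : Type*} [AddCommGroup M] {p q : Fin 2 → M}
    (h : ∑ s, p s = ∑ s, q s) (s : Fin 2) : q s - p s = p (1 - s) - q (1 - s) := by
  rw [Fin.sum_univ_two, Fin.sum_univ_two] at h
  rw [sub_eq_sub_iff_add_eq_add]
  fin_cases s <;> simp [h, add_comm]

lemma normOr_eq_ite_of_forall_ne {X : Type*} [Fintype X] (d f : X → ℝ) {t : X}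
    (ht : f t ≠ 0) (hf : ∀ s, s ≠ t → f s = 0) (s : X) :
    normOr d f s = if s = t then 1 else 0 := by
  have hsum : ∑ s, f s = f t := Finset.sum_eq_single t (fun s _ hs => hf s hs) (by simp)
  rw [normOr, if_neg fun h => ht (h t), hsum]
  split_ifs with hs
  · subst hs
    exact div_self ht
  · rw [hf s hs, zero_div]

lemma normOr_posPart_sub_of_fin_two {p q : Fin 2 → ℝ} (hsum : ∑ s, p s = ∑ s, q s)
    (hpq : p ≠ q) (d : Fin 2 → ℝ) (s : Fin 2) :
    normOr d (fun s => max 0 (q s - p s)) s = if p s < q s then 1 else 0 := by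
  obtain ⟨t, ht⟩ := exists_lt_of_sum_eq_of_ne hsum hpq
  have hlt : ∀ s, s ≠ t → q s < p s := by
    intro s hs
    have hst : 1 - s = t := by fin_cases s <;> fin_cases t <;> simp_all
    linarith [Fin.sub_eq_sub_one_sub_of_sum_eq hsum s, hst ▸ ht]
  rw [normOr_eq_ite_of_forall_ne d _ (t := t) (by simpa using ht)
    fun s hs => max_eq_left (by linarith [hlt s hs])]
  by_cases hs : s = t
  · simp [hs, ht]
  · simp [hs, (hlt s hs).le]

lemma rrsLaw_eq_of_trajProb_mul_prod_eq_zero {X : Type*} [Fintype X] [DecidableEq X] {K : ℕ}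
    {q : X → ℝ} {pdraft : (k : Fin K) → (Fin (k : ℕ) → X) → X → ℝ} {d : X → ℝ}
    (h : ∀ x, trajProb K pdraft x * ∏ j ∈ Finset.range K, (1 - thetaN K q pdraft d j x) = 0)
    (z : X) :
    rrsLaw K q pdraft d z = ∑ x, trajProb K pdraft x * ∑ k : Fin K,
      (∏ j ∈ Finset.range k, (1 - thetaN K q pdraft d j x)) * thetaN K q pdraft d k x *
        (if x k = z then 1 else 0) := by
  refine Finset.sum_congr rfl fun x _ => ?_
  rw [mul_add, ← mul_assoc _ _ (Qres K q pdraft d K x z), h x, zero_mul, add_zero]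
  congr! 4

section binDraft

variable {p q : Fin 2 → ℝ} (d : Fin 2 → ℝ)

lemma trajProb_binDraft (x : Fin 2 → Fin 2) :
    trajProb 2 (binDraft p) x = p (x 0) * if x 1 = 1 - x 0 then 1 else 0 := by
  simp [trajProb, Fin.prod_univ_two, binDraft]

lemma sum_trajProb_binDraft_mul (F : (Fin 2 → Fin 2) → ℝ) :
    ∑ x, trajProb 2 (binDraft p) x * F x = ∑ a, p a * F ![a, 1 - a] := by
  rw [← (finTwoArrowEquiv (Fin 2)).symm.sum_comp, Fintype.sum_prod_type]
  simp [trajProb_binDraft]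

lemma thetaN_binDraft_zero (x : Fin 2 → Fin 2) :
    thetaN 2 q (binDraft p) d 0 x = accProb (p (x 0)) (q (x 0)) := by
  simp [thetaN, binDraft, Qres]

lemma thetaN_binDraft_one (x : Fin 2 → Fin 2) :
    thetaN 2 q (binDraft p) d 1 x =
      accProb (if x 1 = 1 - x 0 then 1 else 0) (normOr d (fun s => max 0 (q s - p s)) (x 1)) := by
  simp [thetaN, binDraft, Qres]
lemma thetaN_binDraft_one_of_eq (hsum : ∑ s, p s = ∑ s, q s) (hpq : p ≠ q)
    {x : Fin 2 → Fin 2} (hx : x 1 = 1 - x 0) :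
    thetaN 2 q (binDraft p) d 1 x = if p (x 1) < q (x 1) then 1 else 0 := by
  rw [thetaN_binDraft_one, if_pos hx, normOr_posPart_sub_of_fin_two hsum hpq, accProb_one_ite]

lemma thetaN_binDraft_one_eq_one (hp : ∀ s, 0 ≤ p s) (hsum : ∑ s, p s = ∑ s, q s)
    (hpq : p ≠ q) {x : Fin 2 → Fin 2}
    (hx : trajProb 2 (binDraft p) x * (1 - thetaN 2 q (binDraft p) d 0 x) ≠ 0) :
    thetaN 2 q (binDraft p) d 1 x = 1 := by
  rw [trajProb_binDraft, thetaN_binDraft_zero, mul_ne_zero_iff, mul_ne_zero_iff] at hx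
  obtain ⟨⟨-, hdraft⟩, hrej⟩ := hx
  have hx1 : x 1 = 1 - x 0 := by
    by_contra h
    exact hdraft (if_neg h)
  have hrej0 : q (x 0) < p (x 0) :=
    not_le.1 fun h => hrej (by rw [accProb_eq_one_of_le (hp _) h, sub_self])
  have hsub := Fin.sub_eq_sub_one_sub_of_sum_eq hsum (x 1)
  rw [hx1, sub_sub_cancel] at hsub
  rw [thetaN_binDraft_one_of_eq d hsum hpq hx1, if_pos (by rw [hx1]; linarith)]

lemma trajProb_binDraft_mul_prod_one_sub_thetaN (hp : ∀ s, 0 ≤ p s)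
    (hsum : ∑ s, p s = ∑ s, q s) (hpq : p ≠ q) (x : Fin 2 → Fin 2) :
    trajProb 2 (binDraft p) x * ∏ j ∈ Finset.range 2, (1 - thetaN 2 q (binDraft p) d j x) =
      0 := by
  rw [Finset.prod_range_succ, Finset.prod_range_one, ← mul_assoc]
  by_cases h : trajProb 2 (binDraft p) x * (1 - thetaN 2 q (binDraft p) d 0 x) = 0
  · rw [h, zero_mul]
  · rw [thetaN_binDraft_one_eq_one d hp hsum hpq h, sub_self, mul_zero]

lemma rrsLaw_binDraft (hp : IsProbDist p) (hq : IsProbDist q) (hpq : p ≠ q) (z : Fin 2) :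
    rrsLaw 2 q (binDraft p) d z = q z := by
  have hsum : ∑ s, p s = ∑ s, q s := hp.2.trans hq.2.symm
  have hcond (a : Fin 2) :
      ∑ k : Fin 2, (∏ j ∈ Finset.range k, (1 - thetaN 2 q (binDraft p) d j ![a, 1 - a])) *
          thetaN 2 q (binDraft p) d k ![a, 1 - a] * (if ![a, 1 - a] k = z then 1 else 0) =
        accProb (p a) (q a) * (if a = z then 1 else 0) + (1 - accProb (p a) (q a)) *
          (if p (1 - a) < q (1 - a) then 1 else 0) * (if 1 - a = z then 1 else 0) := by
    simp only [Fin.sum_univ_two, Fin.val_zero, Fin.val_one, Finset.prod_range_zero,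
      Finset.prod_range_one, one_mul, thetaN_binDraft_zero,
      thetaN_binDraft_one_of_eq d hsum hpq (x := ![a, 1 - a]) rfl]
    by_cases ha : a = z <;> by_cases ha' : 1 - a = z <;> simp [ha, ha']
  have hswap (a : Fin 2) : 1 - a = z ↔ a = 1 - z := by
    rw [sub_eq_iff_eq_add, eq_sub_iff_add_eq, add_comm, eq_comm]
  rw [rrsLaw_eq_of_trajProb_mul_prod_eq_zero
    (trajProb_binDraft_mul_prod_one_sub_thetaN d hp.1 hsum hpq), sum_trajProb_binDraft_mul]
  simp only [hcond, mul_add, ← mul_assoc, mul_accProb_s7 (hp.1 _) (hq.1 _),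
    mul_one_sub_accProb (hp.1 _) (hq.1 _), Finset.sum_add_distrib]
  simp only [mul_ite, mul_one, mul_zero, hswap, Finset.sum_ite_eq', Finset.mem_univ, if_true,
    sub_sub_cancel, ← Fin.sub_eq_sub_one_sub_of_sum_eq hsum z]
  split_ifs with h
  · rw [min_eq_left h.le, max_eq_right (by linarith)]
    ring
  · rw [min_eq_right (not_lt.1 h), add_zero]

end binDraft

theorem rrs_binary_full_acceptance_general
    (p q : Fin 2 → ℝ) (hp : IsProbDist p) (hq : IsProbDist q) (hpq : p ≠ q)
    (d : Fin 2 → ℝ) :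
    (∀ x : Fin 2 → Fin 2,
        trajProb 2 (binDraft p) x * (1 - thetaN 2 q (binDraft p) d 0 x) ≠ 0 →
        thetaN 2 q (binDraft p) d 1 x = 1) ∧
    (∑ x : Fin 2 → Fin 2, trajProb 2 (binDraft p) x *
        ∏ j ∈ Finset.range 2, (1 - thetaN 2 q (binDraft p) d j x)) = 0 ∧
    (∀ z, rrsLaw 2 q (binDraft p) d z = q z) := by
  have hsum : ∑ s, p s = ∑ s, q s := hp.2.trans hq.2.symm
  exact ⟨fun _ hx => thetaN_binDraft_one_eq_one d hp.1 hsum hpq hx,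
    Finset.sum_eq_zero fun x _ => trajProb_binDraft_mul_prod_one_sub_thetaN d hp.1 hsum hpq x,
    rrsLaw_binDraft d hp hq hpq⟩

/-- **On a binary alphabet, recursive rejection sampling with two draft tokens sampled without
replacement achieves 100% acceptance.**  Conditionally on the first draft being rejected the
second draft is accepted with probability 1, the probability that both drafts are rejected
is 0, and the output recovers the target distribution. -/
theorem rrs_binary_full_acceptance
    (p q : Fin 2 → ℝ) (hp : IsProbDist p) (hq : IsProbDist q) (hpq : p ≠ q)
    (d : Fin 2 → ℝ) (hd : IsProbDist d) :
    (∀ x : Fin 2 → Fin 2,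
        trajProb 2 (binDraft p) x * (1 - thetaN 2 q (binDraft p) d 0 x) ≠ 0 →
        thetaN 2 q (binDraft p) d 1 x = 1) ∧
    (∑ x : Fin 2 → Fin 2, trajProb 2 (binDraft p) x *
        ∏ j ∈ Finset.range 2, (1 - thetaN 2 q (binDraft p) d j x)) = 0 ∧
    (∀ z, rrsLaw 2 q (binDraft p) d z = q z) :=
  rrs_binary_full_acceptance_general p q hp hq hpq d
end

section
/- Deterministic core of the RSD-S verification theorem: let 𝒦 and 𝒳 be finite nonempty sets; for each k ∈ 𝒦 let φ_k : 𝒳 → ℝ be injective and u_k ∈ ℝ, and set ψ_k := T(u_k, φ_k); assume the values ψ_k(x), for (k,x) ∈ 𝒦×𝒳, are pairwise distinct; fix 1 ≤ W ≤ |𝒦×𝒳| and let ((k_1,x_1),…,(k_W,x_W)) be the W pairs with the largest values of ψ_k(x), in strictly decreasing order. Then for every k ∈ 𝒦, writing m := |{i : 1 ≤ i ≤ W, k_i = k}|, the subsequence (x_i : k_i = k), taken in order, equals the list of the m elements of 𝒳 with the largest φ_k-values, in strictly decreasing order of φ_k. -/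
open scoped BigOperators

/-- The Stochastic-Beam-Search transform
`T(u, φ)(x) := −log(exp(−u) − exp(−M) + exp(−φ(x)))`, where `M := max_{y} φ(y)`. -/
noncomputable def Tmap {X : Type*} [Fintype X] [Nonempty X] (u : ℝ) (φ : X → ℝ) (x : X) : ℝ :=
  -Real.log (Real.exp (-u) - Real.exp (-(Finset.univ.sup' Finset.univ_nonempty φ))
    + Real.exp (-(φ x)))

/-- `IsTopList f s l` says that `l` is the list of the `l.length` elements of `s` with the
largest `f`-values, arranged in strictly decreasing order of `f`. -/
def IsTopList {A : Type*} (f : A → ℝ) (s : Finset A) (l : List A) : Prop :=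
  l.Nodup ∧ (∀ a ∈ l, a ∈ s) ∧ l.Pairwise (fun a b => f b < f a) ∧
    ∀ a ∈ s, a ∉ l → ∀ b ∈ l, f a < f b

/-!
Since `exp (-M) ≤ exp (-φ x)`, the argument of the logarithm in `T(u, φ)(x)` is
positive, so `T(u, φ)` is a strictly increasing function of `φ`. Restricting a top list to the
pairs with parent `k` gives the top list of the fibre over `k`, ordered by `T(u_k, φ_k)`, and
hence by `φ_k`.
-/

namespace IsTopList

variable {A B : Type*} {f : A → ℝ} {s : Finset A} {l : List A}

theorem filter (hl : IsTopList f s l) (p : A → Prop) [DecidablePred p] :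
    IsTopList f (s.filter p) (l.filter fun a => decide (p a)) := by
  obtain ⟨hnd, hmem, hpw, htop⟩ := hl
  refine ⟨hnd.filter p, fun a ha => ?_, hpw.filter p, fun a ha hal b hb => ?_⟩
  · rw [List.mem_filter, decide_eq_true_iff] at ha
    exact Finset.mem_filter.mpr ⟨hmem a ha.1, ha.2⟩
  · rw [Finset.mem_filter] at ha
    refine htop a ha.1 (fun h => hal ?_) b (List.mem_of_mem_filter hb)
    exact List.mem_filter.mpr ⟨h, decide_eq_true ha.2⟩

theorem of_map {e : B → A} (he : Function.Injective e) {l : List B}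
    (hl : IsTopList f s (l.map e)) : IsTopList (f ∘ e) (s.preimage e he.injOn) l := by
  obtain ⟨hnd, hmem, hpw, htop⟩ := hl
  refine ⟨hnd.of_map e, fun b hb => ?_, List.pairwise_map.mp hpw, fun a ha hal b hb => ?_⟩
  · exact Finset.mem_preimage.mpr (hmem (e b) (List.mem_map_of_mem hb))
  · refine htop (e a) (Finset.mem_preimage.mp ha) (fun h => hal ?_) (e b) (List.mem_map_of_mem hb)
    exact (List.mem_map_of_injective he).mp h

theorem of_lt_imp_lt {g : A → ℝ} (hl : IsTopList f s l) (hfg : ∀ a b, f a < f b → g a < g b) :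
    IsTopList g s l := by
  obtain ⟨hnd, hmem, hpw, htop⟩ := hl
  exact ⟨hnd, hmem, hpw.imp (hfg _ _), fun a ha hal b hb => hfg a b (htop a ha hal b hb)⟩

end IsTopList

section Tmap

variable {X : Type*} [Fintype X] [Nonempty X]

theorem Tmap_log_arg_pos (u : ℝ) (φ : X → ℝ) (x : X) :
    0 < Real.exp (-u) - Real.exp (-(Finset.univ.sup' Finset.univ_nonempty φ))
      + Real.exp (-(φ x)) := by
  have hM : Real.exp (-(Finset.univ.sup' Finset.univ_nonempty φ)) ≤ Real.exp (-(φ x)) :=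
    Real.exp_le_exp.mpr (neg_le_neg (Finset.le_sup' φ (Finset.mem_univ x)))
  linarith [Real.exp_pos (-u)]

theorem Tmap_lt_Tmap_iff (u : ℝ) (φ : X → ℝ) (x y : X) :
    Tmap u φ x < Tmap u φ y ↔ φ x < φ y := by
  rw [Tmap, Tmap, neg_lt_neg_iff,
    Real.log_lt_log_iff (Tmap_log_arg_pos u φ y) (Tmap_log_arg_pos u φ x),
    add_lt_add_iff_left, Real.exp_lt_exp, neg_lt_neg_iff]

end Tmap

theorem rsds_topW_restriction_general {K X : Type*} [Fintype K] [DecidableEq K]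
    [Fintype X] [Nonempty X]
    (φ : K → X → ℝ) (u : K → ℝ)
    (l : List (K × X))
    (hl : IsTopList (fun kx : K × X => Tmap (u kx.1) (φ kx.1) kx.2) Finset.univ l)
    (k : K) :
    IsTopList (φ k) Finset.univ ((l.filter (fun kx => decide (kx.1 = k))).map Prod.snd) := by
  have hfibre := hl.filter (fun kx => kx.1 = k)
  set L := l.filter (fun kx => decide (kx.1 = k))
  have hL : (L.map Prod.snd).map (Prod.mk k) = L := by
    rw [List.map_map]
    refine (List.map_congr_left fun kx hkx => ?_).trans (List.map_id L)
    have hk : kx.1 = k := by simpa using (List.mem_filter.mp hkx).2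
    exact Prod.ext hk.symm rfl
  rw [← hL] at hfibre
  have hslice := hfibre.of_map (Prod.mk_right_injective k)
  have huniv : (Finset.univ.filter fun kx : K × X => kx.1 = k).preimage (Prod.mk k)
      (Prod.mk_right_injective k).injOn = Finset.univ := by
    ext x; simp
  rw [huniv] at hslice
  exact hslice.of_lt_imp_lt fun x y => (Tmap_lt_Tmap_iff (u k) (φ k) x y).mp

/-- **Deterministic core of the RSD-S verification theorem:** with `ψ_k := T(u_k, φ_k)` and
the values `ψ_k(x)` pairwise distinct, if `l` is the top-`W` list of `𝒦 × 𝒳` by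
`(k, x) ↦ ψ_k(x)`, then for every parent `k` the subsequence of the selected tokens with
parent `k`, taken in order, is the list of the `m` elements of `𝒳` with the largest
`φ_k`-values in strictly decreasing order of `φ_k` (where `m` is its length). -/
theorem rsds_topW_restriction {K X : Type*} [Fintype K] [Nonempty K] [DecidableEq K]
    [Fintype X] [Nonempty X]
    (φ : K → X → ℝ) (hφ : ∀ k, Function.Injective (φ k)) (u : K → ℝ)
    (hdistinct : Function.Injective fun kx : K × X => Tmap (u kx.1) (φ kx.1) kx.2)
    (W : ℕ) (hW1 : 1 ≤ W) (hW2 : W ≤ Fintype.card (K × X))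
    (l : List (K × X))
    (hl : IsTopList (fun kx : K × X => Tmap (u kx.1) (φ kx.1) kx.2) Finset.univ l)
    (hlen : l.length = W)
    (k : K) :
    IsTopList (φ k) Finset.univ ((l.filter (fun kx => decide (kx.1 = k))).map Prod.snd) :=
  rsds_topW_restriction_general φ u l hl k
end

section
/- Gumbel-max trick: let 𝒳 be a finite nonempty set, w : 𝒳 → (0,∞), and let (G_x)_{x∈𝒳} be independent standard Gumbel random variables. Then almost surely the function x ↦ log w(x) + G_x has a unique maximizer, and for every z ∈ 𝒳 the probability that z is this maximizer equals w(z) / Σ_{x∈𝒳} w(x). -/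
open scoped BigOperators
open MeasureTheory

/-- A standard Gumbel random variable: a measurable real-valued random variable with
cumulative distribution function `t ↦ exp(−exp(−t))`. -/
def IsStdGumbel {Ω : Type*} [MeasurableSpace Ω] (μ : Measure Ω) (g : Ω → ℝ) : Prop :=
  Measurable g ∧ ∀ t : ℝ, (μ {ω | g ω ≤ t}).toReal = Real.exp (-Real.exp (-t))

/-!
Condition on the value `t` of `G_z`. By independence, `z` is the strict maximizer with
conditional probability `∏_{x ≠ z} P(G_x < log w_z + t - log w_x) = exp (-c e^{-t})`, where
`c = ∑_{x ≠ z} w_x / w_z`. Against the Gumbel density `exp (-t - e^{-t})` this integrates to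
`1 / (1 + c) = w_z / ∑_x w_x`, since `t ↦ exp (-b e^{-t})` is an antiderivative of
`b exp (-t - b e^{-t})`. Two distinct points cannot both be strict maximizers, so these events are
disjoint; their probabilities add up to `1`, hence a strict maximizer exists almost surely.
-/

open Real Set Filter Topology
open scoped ENNReal

theorem lintegral_Iic_of_hasDerivAt_of_nonneg {g g' : ℝ → ℝ} {m : ℝ} (x : ℝ)
    (hderiv : ∀ t, HasDerivAt g (g' t) t) (hg' : ∀ t, 0 ≤ g' t)
    (hbot : Tendsto g atBot (𝓝 m)) :
    ∫⁻ t in Iic x, ENNReal.ofReal (g' t) = ENNReal.ofReal (g x - m) := by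
  have hcont : Continuous g := continuous_iff_continuousAt.2 fun t => (hderiv t).continuousAt
  have hint : IntegrableOn g' (Iic x) := by
    refine integrableOn_Iic_of_intervalIntegral_norm_tendsto (g x - m) x
      (fun a => intervalIntegral.integrableOn_deriv_of_nonneg hcont.continuousOn
        (fun t _ => hderiv t) (fun t _ => hg' t)) tendsto_id ?_
    have hftc : ∀ a, ∫ t in a..x, ‖g' t‖ = g x - g a := fun a => by
      simp only [Real.norm_of_nonneg (hg' _)]
      exact intervalIntegral.integral_eq_sub_of_hasDerivAt (fun t _ => hderiv t)
        (intervalIntegral.intervalIntegrable_deriv_of_nonneg hcont.continuousOn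
          (fun t _ => hderiv t) (fun t _ => hg' t))
    simpa only [hftc, id_eq] using tendsto_const_nhds.sub hbot
  rw [← ofReal_integral_eq_lintegral_ofReal hint (ae_of_all _ hg'),
    integral_Iic_of_hasDerivAt_of_tendsto' (fun t _ => hderiv t) hint hbot]

theorem lintegral_of_hasDerivAt_of_nonneg {g g' : ℝ → ℝ} {m M : ℝ}
    (hderiv : ∀ t, HasDerivAt g (g' t) t) (hg' : ∀ t, 0 ≤ g' t)
    (hbot : Tendsto g atBot (𝓝 m)) (htop : Tendsto g atTop (𝓝 M)) :
    ∫⁻ t, ENNReal.ofReal (g' t) = ENNReal.ofReal (M - m) := by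
  have h := tendsto_measure_Iic_atTop (volume.withDensity fun t => ENNReal.ofReal (g' t))
  simp only [withDensity_apply', Measure.restrict_univ,
    lintegral_Iic_of_hasDerivAt_of_nonneg _ hderiv hg' hbot] at h
  exact tendsto_nhds_unique h ((ENNReal.continuous_ofReal.tendsto _).comp (htop.sub_const m))

section ExpNegMulExpNeg

variable {b : ℝ}

theorem hasDerivAt_exp_neg_mul_exp_neg (b t : ℝ) :
    HasDerivAt (fun t => exp (-b * exp (-t))) (b * exp (-t - b * exp (-t))) t := by
  convert (((hasDerivAt_neg t).exp).const_mul (-b)).exp using 1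
  rw [sub_eq_add_neg, exp_add, neg_mul]
  ring

theorem tendsto_exp_neg_mul_exp_neg_atBot (hb : 0 < b) :
    Tendsto (fun t => exp (-b * exp (-t))) atBot (𝓝 0) :=
  tendsto_exp_atBot.comp <| (tendsto_const_mul_atBot_of_neg (neg_lt_zero.2 hb)).2 <|
    tendsto_exp_atTop.comp tendsto_neg_atBot_atTop

theorem tendsto_exp_neg_mul_exp_neg_atTop (b : ℝ) :
    Tendsto (fun t => exp (-b * exp (-t))) atTop (𝓝 1) := by
  have h := tendsto_exp_neg_atTop_nhds_zero.const_mul (-b)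
  rw [mul_zero] at h
  rw [← exp_zero]
  exact (continuous_exp.tendsto 0).comp h

theorem lintegral_Iic_mul_exp_neg_sub_mul_exp_neg (hb : 0 < b) (x : ℝ) :
    ∫⁻ t in Iic x, ENNReal.ofReal (b * exp (-t - b * exp (-t)))
      = ENNReal.ofReal (exp (-b * exp (-x))) := by
  simpa using lintegral_Iic_of_hasDerivAt_of_nonneg x (hasDerivAt_exp_neg_mul_exp_neg b)
    (fun t => by positivity) (tendsto_exp_neg_mul_exp_neg_atBot hb)

theorem lintegral_mul_exp_neg_sub_mul_exp_neg (hb : 0 < b) :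
    ∫⁻ t, ENNReal.ofReal (b * exp (-t - b * exp (-t))) = 1 := by
  simpa using lintegral_of_hasDerivAt_of_nonneg (hasDerivAt_exp_neg_mul_exp_neg b)
    (fun t => by positivity) (tendsto_exp_neg_mul_exp_neg_atBot hb)
    (tendsto_exp_neg_mul_exp_neg_atTop b)

end ExpNegMulExpNeg

noncomputable section

def gumbelPDF (t : ℝ) : ℝ≥0∞ := ENNReal.ofReal (exp (-t - exp (-t)))

def gumbelMeasure : Measure ℝ := volume.withDensity gumbelPDF

instance : NullSingletonClass gumbelMeasure := nullSingletonClass_withDensity _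

theorem gumbelMeasure_Iic (x : ℝ) :
    gumbelMeasure (Iic x) = ENNReal.ofReal (exp (-exp (-x))) := by
  simpa [gumbelMeasure, gumbelPDF, withDensity_apply _ measurableSet_Iic]
    using lintegral_Iic_mul_exp_neg_sub_mul_exp_neg one_pos x

theorem gumbelMeasure_Iio (x : ℝ) :
    gumbelMeasure (Iio x) = ENNReal.ofReal (exp (-exp (-x))) := by
  rw [measure_congr Iio_ae_eq_Iic, gumbelMeasure_Iic]

instance : IsProbabilityMeasure gumbelMeasure where
  measure_univ := by
    simpa [gumbelMeasure, gumbelPDF] using lintegral_mul_exp_neg_sub_mul_exp_neg one_pos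

theorem lintegral_exp_neg_mul_exp_neg_gumbelMeasure {c : ℝ} (hc : 0 ≤ c) :
    ∫⁻ t, ENNReal.ofReal (exp (-c * exp (-t))) ∂gumbelMeasure
      = ENNReal.ofReal (1 + c)⁻¹ := by
  have hb : 0 < 1 + c := by linarith
  have htilt : ∀ t, gumbelPDF t * ENNReal.ofReal (exp (-c * exp (-t)))
      = ENNReal.ofReal (1 + c)⁻¹ * ENNReal.ofReal ((1 + c) * exp (-t - (1 + c) * exp (-t))) := by
    intro t
    rw [gumbelPDF, ← ENNReal.ofReal_mul (by positivity), ← ENNReal.ofReal_mul (by positivity),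
      ← exp_add, inv_mul_cancel_left₀ hb.ne']
    ring_nf
  rw [gumbelMeasure, lintegral_withDensity_eq_lintegral_mul _ (by unfold gumbelPDF; fun_prop)
    (by fun_prop)]
  simp only [Pi.mul_apply, htilt]
  rw [lintegral_const_mul _ (by fun_prop), lintegral_mul_exp_neg_sub_mul_exp_neg hb, mul_one]

theorem IsStdGumbel.map_eq {Ω : Type*} [MeasurableSpace Ω] {μ : Measure Ω}
    [IsProbabilityMeasure μ] {g : Ω → ℝ} (hg : IsStdGumbel μ g) :
    μ.map g = gumbelMeasure := by
  have := Measure.isProbabilityMeasure_map (μ := μ) hg.1.aemeasurable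
  refine Measure.ext_of_Iic _ _ fun x => ?_
  rw [Measure.map_apply hg.1 measurableSet_Iic, gumbelMeasure_Iic, ← hg.2 x,
    ENNReal.ofReal_toReal (measure_ne_top _ _)]
  rfl

theorem map_eq_pi_gumbelMeasure {X Ω : Type*} [Fintype X] [MeasurableSpace Ω]
    {μ : Measure Ω} [IsProbabilityMeasure μ] {G : X → Ω → ℝ} (hG : ∀ x, IsStdGumbel μ (G x))
    (hindep : ProbabilityTheory.iIndepFun G μ) :
    μ.map (fun ω x => G x ω) = Measure.pi fun _ => gumbelMeasure := by
  rw [(ProbabilityTheory.iIndepFun_iff_map_fun_eq_pi_map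
    fun x => (hG x).1.aemeasurable).1 hindep]
  simp only [(hG _).map_eq]

section StrictMaximizer

variable {X : Type*}

theorem eq_of_forall_ne_lt {β : Type*} [Preorder β] {v : X → β} {z z' : X}
    (hz : ∀ x, x ≠ z → v x < v z) (hz' : ∀ x, x ≠ z' → v x < v z') : z = z' :=
  by_contra fun h => lt_asymm (hz z' (Ne.symm h)) (hz' z h)

theorem measurableSet_setOf_forall_ne_add_lt [Finite X] (b : X → ℝ) (z : X) :
    MeasurableSet {f : X → ℝ | ∀ x, x ≠ z → b x + f x < b z + f z} := by
  simp only [ofPred_forall]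
  exact .iInter fun x => .iInter fun _ => measurableSet_lt (by fun_prop) (by fun_prop)

theorem MeasureTheory.Measure.pi_setOf_forall_ne_add_lt [Fintype X] [DecidableEq X]
    (ν : X → Measure ℝ) [∀ x, SigmaFinite (ν x)] (b : X → ℝ) (z : X) :
    Measure.pi ν {f | ∀ x, x ≠ z → b x + f x < b z + f z}
      = ∫⁻ t, ∏ x : {x // x ≠ z}, ν x (Iio (b z + t - b x)) ∂ν z := by
  let e := MeasurableEquiv.piEquivPiSubtypeProd (fun _ : X => ℝ) (· = z)
  let T : Set (({x // x = z} → ℝ) × ({x // x ≠ z} → ℝ)) :=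
    {q | ∀ x : {x // x ≠ z}, b x + q.2 x < b z + q.1 ⟨z, rfl⟩}
  have hT : MeasurableSet T := by
    simp only [T, ofPred_forall]
    exact MeasurableSet.iInter fun x => measurableSet_lt (by fun_prop) (by fun_prop)
  have hpre : {f : X → ℝ | ∀ x, x ≠ z → b x + f x < b z + f z} = e ⁻¹' T := by
    ext f
    simp [e, T, MeasurableEquiv.piEquivPiSubtypeProd, Equiv.piEquivPiSubtypeProd]
  have hslice : ∀ g,
      Prod.mk g ⁻¹' T = univ.pi fun x : {x // x ≠ z} => Iio (b z + g ⟨z, rfl⟩ - b x) := by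
    intro g
    ext h
    simp [T, lt_sub_iff_add_lt']
  rw [hpre, (measurePreserving_piEquivPiSubtypeProd ν _).measure_preimage hT.nullMeasurableSet,
    Measure.prod_apply hT]
  simp only [hslice, Measure.pi_pi]
  -- `piEquivPiSubtypeProd` builds the product over `{x // x = z}` with `Subtype.fintype`,
  -- not with the instance `Fintype.subtypeEq` that would be found here.
  exact (@measurePreserving_piUnique _ (Subtype.fintype _) (fun _ => ℝ) _ _ _).lintegral_comp_emb
    (MeasurableEquiv.measurableEmbedding _)
    (fun t => ∏ x : {x // x ≠ z}, ν x (Iio (b z + t - b x)))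

theorem pi_gumbelMeasure_setOf_forall_ne_log_add_lt [Fintype X] [DecidableEq X]
    {w : X → ℝ} (hw : ∀ x, 0 < w x) (z : X) :
    Measure.pi (fun _ : X => gumbelMeasure)
        {f | ∀ x, x ≠ z → log (w x) + f x < log (w z) + f z}
      = ENNReal.ofReal (w z / ∑ x, w x) := by
  set c := ∑ x : {x // x ≠ z}, w x / w z
  have hc : 0 ≤ c := Finset.sum_nonneg fun x _ => div_nonneg (hw x).le (hw z).le
  have hfactor : ∀ t (x : X), gumbelMeasure (Iio (log (w z) + t - log (w x)))
      = ENNReal.ofReal (exp (-(w x / w z) * exp (-t))) := by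
    intro t x
    rw [gumbelMeasure_Iio]
    congr 2
    rw [neg_sub, sub_add_eq_sub_sub, exp_sub, exp_sub, exp_log (hw x), exp_log (hw z), exp_neg]
    ring
  have hprod : ∀ t, ∏ x : {x // x ≠ z}, gumbelMeasure (Iio (log (w z) + t - log (w x)))
      = ENNReal.ofReal (exp (-c * exp (-t))) := by
    intro t
    simp only [hfactor, c]
    rw [← ENNReal.ofReal_prod_of_nonneg fun x _ => (exp_pos _).le, ← exp_sum,
      ← Finset.sum_mul, ← Finset.sum_neg_distrib]
  have hsum : 1 + c = (∑ x, w x) / w z := by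
    rw [Fintype.sum_eq_add_sum_subtype_ne w z, add_div, div_self (hw z).ne', Finset.sum_div]
  rw [Measure.pi_setOf_forall_ne_add_lt, funext hprod,
    lintegral_exp_neg_mul_exp_neg_gumbelMeasure hc, hsum, inv_div]

end StrictMaximizer

end

/-- **Gumbel-max trick:** with independent standard Gumbel perturbations, almost surely
`x ↦ log w(x) + G_x` has a unique maximizer, and each `z` is this maximizer with
probability `w(z) / Σₓ w(x)`. -/
theorem gumbel_max_trick {X Ω : Type*} [Fintype X] [Nonempty X]
    [MeasurableSpace Ω] (μ : Measure Ω) [IsProbabilityMeasure μ]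
    (w : X → ℝ) (hw : ∀ x, 0 < w x)
    (G : X → Ω → ℝ)
    (hG : ∀ x, IsStdGumbel μ (G x))
    (hindep : ProbabilityTheory.iIndepFun (m := fun _ : X => (inferInstance : MeasurableSpace ℝ))
      G μ) :
    μ {ω | ∃! z : X, ∀ x, x ≠ z →
        Real.log (w x) + G x ω < Real.log (w z) + G z ω} = 1 ∧
    ∀ z : X,
      (μ {ω | ∀ x, x ≠ z →
          Real.log (w x) + G x ω < Real.log (w z) + G z ω}).toReal
        = w z / ∑ x, w x := by
  classical
  set A : X → Set Ω := fun z => {ω | ∀ x, x ≠ z → log (w x) + G x ω < log (w z) + G z ω}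
  have hGm : Measurable fun ω x => G x ω := measurable_pi_lambda _ fun x => (hG x).1
  have hAmeas : ∀ z, MeasurableSet (A z) :=
    fun z => hGm (measurableSet_setOf_forall_ne_add_lt _ z)
  have hA : ∀ z, μ (A z) = ENNReal.ofReal (w z / ∑ x, w x) := fun z => by
    rw [← pi_gumbelMeasure_setOf_forall_ne_log_add_lt hw z, ← map_eq_pi_gumbelMeasure hG hindep,
      Measure.map_apply hGm (measurableSet_setOf_forall_ne_add_lt _ z)]
    rfl
  have hW : 0 < ∑ x, w x := Finset.sum_pos (fun x _ => hw x) Finset.univ_nonempty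
  refine ⟨?_, fun z => by rw [hA z, ENNReal.toReal_ofReal (div_pos (hw z) hW).le]⟩
  have hunion : {ω | ∃! z : X, ∀ x, x ≠ z → log (w x) + G x ω < log (w z) + G z ω}
      = ⋃ z, A z := by
    ext ω
    simp only [mem_ofPred_eq, mem_iUnion]
    exact ⟨ExistsUnique.exists, fun ⟨z, hz⟩ => ⟨z, hz, fun y hy => eq_of_forall_ne_lt hy hz⟩⟩
  have hdisj : Pairwise (Function.onFun Disjoint A) := fun z z' hne =>
    disjoint_left.2 fun ω hz hz' => hne (eq_of_forall_ne_lt hz hz')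
  rw [hunion, measure_iUnion hdisj hAmeas, tsum_fintype, Finset.sum_congr rfl fun z _ => hA z,
    ← ENNReal.ofReal_sum_of_nonneg fun z _ => (div_pos (hw z) hW).le, ← Finset.sum_div,
    div_self hW.ne', ENNReal.ofReal_one]
end

section
/- Gumbel-Top-b produces samples without replacement: let p be a probability distribution on a finite nonempty set 𝒳 with p(x) > 0 for all x, let (G_x)_{x∈𝒳} be independent standard Gumbel random variables, and let 1 ≤ b ≤ |𝒳|. Then for all pairwise distinct x_1,…,x_b ∈ 𝒳, the probability that the b largest values of x ↦ log p(x) + G_x are attained at x_1,…,x_b in strictly decreasing order equals ∏_{i=1}^{b} p(x_i) / (1 − Σ_{j=1}^{i−1} p(x_j)); that is, the ordered Gumbel-Top-b output is distributed as b successive samples drawn without replacement from p. -/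
/-
`Y x = log p(x) + G x` is Gumbel with CDF `t ↦ exp (-p(x) e^{-t})`, so the maximum of independent
such variables is again of this form with the weights added, and the density of weight `a` times
the CDF of weight `b` is `a / (a + b)` times the density of weight `a + b`. Conditioning on the
value `s` of the leader `x₁`, what remains is the same ordering event for `x₂, …, x_b` with every
value below `s`; by induction its probability is the without-replacement probability of
`x₂, …, x_b` times the Gumbel CDF at `s` of the remaining mass, and integrating against the
density of `Y x₁` peels off the factor `p(x₁) / (remaining mass including x₁)`.
-/

open scoped BigOperators
open MeasureTheory

open Set Filter Topology Real

namespace ProbabilityTheory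

/-- The CDF of the Gumbel law with location `log c`; for `c = 0` it is the constant `1`. -/
noncomputable def gumbelCDF (c t : ℝ) : ℝ := exp (-(c * exp (-t)))

noncomputable def gumbelPDF (c t : ℝ) : ℝ := c * exp (-t) * gumbelCDF c t

noncomputable def gumbelMeasure (c : ℝ) : Measure ℝ :=
  volume.withDensity fun t => ENNReal.ofReal (gumbelPDF c t)

lemma gumbelCDF_nonneg (c t : ℝ) : 0 ≤ gumbelCDF c t := (exp_pos _).le

lemma gumbelCDF_le_one {c : ℝ} (hc : 0 ≤ c) (t : ℝ) : gumbelCDF c t ≤ 1 :=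
  exp_le_one_iff.mpr (by have := exp_pos (-t); nlinarith)

lemma gumbelCDF_mul_gumbelCDF (a b t : ℝ) :
    gumbelCDF a t * gumbelCDF b t = gumbelCDF (a + b) t := by
  unfold gumbelCDF
  rw [← exp_add]; ring_nf

lemma prod_gumbelCDF {ι : Type*} (s : Finset ι) (w : ι → ℝ) (t : ℝ) :
    ∏ i ∈ s, gumbelCDF (w i) t = gumbelCDF (∑ i ∈ s, w i) t := by
  unfold gumbelCDF
  rw [← exp_sum, Finset.sum_mul, ← Finset.sum_neg_distrib]

lemma gumbelPDF_nonneg {c : ℝ} (hc : 0 ≤ c) (t : ℝ) : 0 ≤ gumbelPDF c t :=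
  mul_nonneg (mul_nonneg hc (exp_pos _).le) (gumbelCDF_nonneg c t)

lemma gumbelPDF_mul_gumbelCDF {a b : ℝ} (hab : a + b ≠ 0) (t : ℝ) :
    gumbelPDF a t * gumbelCDF b t = a / (a + b) * gumbelPDF (a + b) t := by
  simp only [gumbelPDF, mul_assoc, gumbelCDF_mul_gumbelCDF]
  field_simp

lemma hasDerivAt_gumbelCDF (c t : ℝ) : HasDerivAt (gumbelCDF c) (gumbelPDF c t) t := by
  have h : HasDerivAt (fun s => -(c * exp (-s))) (c * exp (-t)) t := by
    have := (((hasDerivAt_id t).neg.exp).const_mul c).neg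
    simp only [mul_neg, mul_one, neg_neg] at this
    exact this
  rw [gumbelPDF, mul_comm]
  exact h.exp

lemma tendsto_gumbelCDF_atBot {c : ℝ} (hc : 0 < c) : Tendsto (gumbelCDF c) atBot (𝓝 0) :=
  tendsto_exp_atBot.comp <| tendsto_neg_atTop_atBot.comp <|
    (tendsto_exp_atTop.comp tendsto_neg_atBot_atTop).const_mul_atTop hc

lemma tendsto_gumbelCDF_atTop (c : ℝ) : Tendsto (gumbelCDF c) atTop (𝓝 1) := by
  have h : Tendsto (fun t => -(c * exp (-t))) atTop (𝓝 (-(c * 0))) :=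
    ((tendsto_exp_atBot.comp tendsto_neg_atTop_atBot).const_mul c).neg
  have := (continuous_exp.tendsto _).comp h
  rwa [mul_zero, neg_zero, exp_zero] at this

lemma integrableOn_gumbelPDF_Iic {c : ℝ} (hc : 0 ≤ c) (t : ℝ) :
    IntegrableOn (gumbelPDF c) (Iic t) := by
  have hcont : Continuous (gumbelPDF c) := by unfold gumbelPDF gumbelCDF; fun_prop
  refine integrableOn_Iic_of_intervalIntegral_norm_bounded 1 t
    (fun _ => hcont.integrableOn_Ioc) (tendsto_id (x := atBot)) ?_
  filter_upwards [eventually_le_atBot t] with a ha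
  simp_rw [id, Real.norm_of_nonneg (gumbelPDF_nonneg hc _)]
  rw [intervalIntegral.integral_eq_sub_of_hasDerivAt (fun s _ => hasDerivAt_gumbelCDF c s)
    (hcont.intervalIntegrable _ _)]
  linarith [gumbelCDF_le_one hc t, gumbelCDF_nonneg c a]

lemma gumbelMeasure_Iic {c : ℝ} (hc : 0 < c) (t : ℝ) :
    gumbelMeasure c (Iic t) = ENNReal.ofReal (gumbelCDF c t) := by
  rw [gumbelMeasure, withDensity_apply _ measurableSet_Iic,
    ← ofReal_integral_eq_lintegral_ofReal (integrableOn_gumbelPDF_Iic hc.le t)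
      (.of_forall (gumbelPDF_nonneg hc.le)),
    integral_Iic_of_hasDerivAt_of_tendsto' (fun s _ => hasDerivAt_gumbelCDF c s)
      (integrableOn_gumbelPDF_Iic hc.le t) (tendsto_gumbelCDF_atBot hc), sub_zero]

lemma gumbelMeasure_Iio {c : ℝ} (hc : 0 < c) (t : ℝ) :
    gumbelMeasure c (Iio t) = ENNReal.ofReal (gumbelCDF c t) := by
  have : gumbelMeasure c {t} = 0 := withDensity_absolutelyContinuous _ _ (measure_singleton t)
  rw [measure_congr (Iio_ae_eq_Iic' this), gumbelMeasure_Iic hc]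

lemma isProbabilityMeasure_gumbelMeasure {c : ℝ} (hc : 0 < c) :
    IsProbabilityMeasure (gumbelMeasure c) where
  measure_univ := by
    refine tendsto_nhds_unique (tendsto_measure_Iic_atTop _) ?_
    simp_rw [gumbelMeasure_Iic hc, ← ENNReal.ofReal_one]
    exact ENNReal.tendsto_ofReal (tendsto_gumbelCDF_atTop c)

lemma setLIntegral_gumbelCDF_gumbelMeasure {a b : ℝ} (ha : 0 < a) (hb : 0 ≤ b) {A : Set ℝ}
    (hA : MeasurableSet A) :
    ∫⁻ s in A, ENNReal.ofReal (gumbelCDF b s) ∂gumbelMeasure a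
      = ENNReal.ofReal (a / (a + b)) * gumbelMeasure (a + b) A := by
  have hmeas : ∀ c, Measurable (gumbelPDF c) := fun c => by
    unfold gumbelPDF gumbelCDF; fun_prop
  have hF : Measurable (gumbelCDF b) := by unfold gumbelCDF; fun_prop
  rw [gumbelMeasure, setLIntegral_withDensity_eq_setLIntegral_mul _ (hmeas a).ennreal_ofReal
    hF.ennreal_ofReal hA]
  simp_rw [Pi.mul_apply, ← ENNReal.ofReal_mul (gumbelPDF_nonneg ha.le _),
    gumbelPDF_mul_gumbelCDF (by positivity : a + b ≠ 0),
    ENNReal.ofReal_mul (by positivity : 0 ≤ a / (a + b))]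
  rw [lintegral_const_mul _ (hmeas _).ennreal_ofReal, gumbelMeasure, withDensity_apply _ hA]

end ProbabilityTheory

open ProbabilityTheory

lemma IsStdGumbel.map_log_add {Ω : Type*} [MeasurableSpace Ω] {μ : Measure Ω}
    [IsFiniteMeasure μ] {g : Ω → ℝ} (hg : IsStdGumbel μ g) {c : ℝ} (hc : 0 < c) :
    μ.map (fun ω => log c + g ω) = gumbelMeasure c := by
  have := isProbabilityMeasure_gumbelMeasure hc
  refine Measure.ext_of_Iic _ _ fun t => ?_
  have hset : (fun ω => log c + g ω) ⁻¹' Iic t = {ω | g ω ≤ t - log c} := by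
    ext; simp [le_sub_iff_add_le']
  rw [Measure.map_apply (hg.1.const_add _) measurableSet_Iic, hset,
    ← ENNReal.ofReal_toReal (measure_ne_top μ _), hg.2, gumbelMeasure_Iic hc, gumbelCDF,
    neg_sub, exp_sub, exp_log hc, div_eq_mul_inv, ← exp_neg]

lemma Fin.sum_Iio_succ {M : Type*} [AddCommMonoid M] {n : ℕ} (f : Fin (n + 1) → M)
    (i : Fin n) : ∑ j ∈ Finset.Iio i.succ, f j = f 0 + ∑ j ∈ Finset.Iio i, f j.succ := by
  have : Finset.Iio i.succ = ((Finset.Iio i).map (Fin.succEmb n)).cons 0 (by simp) := by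
    ext j; cases j using Fin.cases <;> simp [Fin.succ_lt_succ_iff]
  rw [this, Finset.sum_cons, Finset.sum_map]; rfl

section TopRanked

variable {X : Type*}

/-- `TopRanked S L A f`: along `L` the values of `f` start in `A` and decrease strictly, and
the values on `S` lie below all of them (in `A` if `L = []`). The event of the theorem has
`A = univ`; conditioning on a leader of value `s` leaves the event with `A = Iio s`. -/
def TopRanked (S : Finset X) : List X → Set ℝ → (X → ℝ) → Prop
  | [], A, f => ∀ y ∈ S, f y ∈ A
  | x :: L, A, f => f x ∈ A ∧ TopRanked S L (Iio (f x)) f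

lemma topRanked_congr {S : Finset X} {f g : X → ℝ} (hS : ∀ y ∈ S, f y = g y) :
    ∀ {L : List X} {A : Set ℝ}, (∀ x ∈ L, f x = g x) → (TopRanked S L A f ↔ TopRanked S L A g)
  | [], A, _ => by simp +contextual only [TopRanked, hS]
  | x :: L, A, hL => by
    simp only [TopRanked, hL x List.mem_cons_self,
      topRanked_congr hS fun z hz => hL z (List.mem_cons_of_mem x hz)]

lemma measurableSet_topRanked (S : Finset X) :
    ∀ L : List X, MeasurableSet {q : ℝ × (X → ℝ) | TopRanked S L (Iio q.1) q.2}
  | [] => by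
    simp only [TopRanked, mem_Iio, ofPred_forall]
    exact .biInter S.countable_toSet fun y _ => measurableSet_lt (by fun_prop) measurable_fst
  | x :: L => by
    simp only [TopRanked, mem_Iio, ofPred_and]
    exact (measurableSet_lt (by fun_prop) measurable_fst).inter
      ((measurableSet_topRanked S L).preimage (f := fun q : ℝ × (X → ℝ) => (q.2 x, q.2))
        (by fun_prop))

lemma topRanked_Iio_iff {S : Finset X} {f : X → ℝ} :
    ∀ {L : List X} {t : ℝ}, TopRanked S L (Iio t) f ↔
      (∀ y ∈ S, f y < t) ∧ (∀ x ∈ L, f x < t) ∧ L.Pairwise (fun a b => f b < f a) ∧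
        ∀ y ∈ S, ∀ x ∈ L, f y < f x
  | [], t => by simp [TopRanked]
  | x :: L, t => by
    simp only [TopRanked, mem_Iio, topRanked_Iio_iff, List.mem_cons, List.pairwise_cons,
      forall_eq_or_imp]
    constructor
    · rintro ⟨hx, hS, hL, hpair, hSL⟩
      exact ⟨fun y hy => (hS y hy).trans hx, ⟨hx, fun z hz => (hL z hz).trans hx⟩, ⟨hL, hpair⟩,
        fun y hy => ⟨hS y hy, hSL y hy⟩⟩
    · rintro ⟨-, ⟨hx, -⟩, ⟨hL, hpair⟩, hSL⟩
      exact ⟨hx, fun y hy => (hSL y hy).1, hL, hpair, fun y hy => (hSL y hy).2⟩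

lemma topRanked_univ_iff {S : Finset X} {f : X → ℝ} {L : List X} :
    TopRanked S L univ f ↔ L.Pairwise (fun a b => f b < f a) ∧ ∀ y ∈ S, ∀ x ∈ L, f y < f x := by
  cases L with
  | nil => simp [TopRanked]
  | cons x L =>
    simp only [TopRanked, mem_univ, true_and, topRanked_Iio_iff, List.mem_cons,
      List.pairwise_cons, forall_eq_or_imp, forall_and]
    tauto

end TopRanked

namespace ProbabilityTheory

lemma IndepFun.measure_preimage_eq_lintegral {Ω α β : Type*} [MeasurableSpace Ω]
    [MeasurableSpace α] [MeasurableSpace β] {μ : Measure Ω} [IsFiniteMeasure μ]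
    {U : Ω → α} {V : Ω → β} (h : IndepFun U V μ) (hU : Measurable U) (hV : Measurable V)
    {C : Set (α × β)} (hC : MeasurableSet C) :
    μ ((fun ω => (U ω, V ω)) ⁻¹' C) = ∫⁻ a, μ (V ⁻¹' (Prod.mk a ⁻¹' C)) ∂(μ.map U) := by
  rw [← Measure.map_apply (hU.prodMk hV) hC,
    (indepFun_iff_map_prod_eq_prod_map_map hU.aemeasurable hV.aemeasurable).mp h,
    Measure.prod_apply hC]
  simp_rw [Measure.map_apply hV (measurable_prodMk_left hC)]

lemma iIndepFun.indepFun_finset_of_notMem {Ω ι β : Type*} [MeasurableSpace Ω]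
    [MeasurableSpace β] {μ : Measure Ω} {f : ι → Ω → β} (h : iIndepFun f μ)
    (hf : ∀ i, Measurable (f i)) {i : ι} {T : Finset ι} (hi : i ∉ T) :
    IndepFun (f i) (fun ω (j : T) => f j ω) μ := by
  have := (h.indepFun_finset {i} T (Finset.disjoint_singleton_left.mpr hi) hf).comp
    (measurable_pi_apply ⟨i, Finset.mem_singleton_self i⟩) measurable_id
  exact this

section Sampling

variable {X : Type*}

/-- The probability that successive draws without replacement from the weights `w`, of total
mass `T`, produce the list `L` in this order. -/
noncomputable def sworProb (w : X → ℝ) : ℝ → List X → ℝ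
  | _, [] => 1
  | T, x :: L => w x / T * sworProb w (T - w x) L

lemma sworProb_nonneg {w : X → ℝ} (hw : ∀ x, 0 ≤ w x) :
    ∀ {L : List X} {T : ℝ}, (L.map w).sum ≤ T → 0 ≤ sworProb w T L
  | [], _, _ => zero_le_one
  | x :: L, T, hT => by
    have hL : 0 ≤ (L.map w).sum := List.sum_nonneg (by simp [hw])
    rw [List.map_cons, List.sum_cons] at hT
    exact mul_nonneg (div_nonneg (hw x) (by linarith [hw x]))
      (sworProb_nonneg hw (by linarith))

lemma sworProb_ofFn (w : X → ℝ) : ∀ {n : ℕ} (T : ℝ) (xs : Fin n → X),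
    sworProb w T (List.ofFn xs) = ∏ i, w (xs i) / (T - ∑ j ∈ Finset.Iio i, w (xs j))
  | 0, _, _ => by simp [sworProb]
  | n + 1, T, xs => by
    have : Finset.Iio (0 : Fin (n + 1)) = ∅ := by ext j; simp
    simp only [List.ofFn_succ, sworProb, sworProb_ofFn, Fin.prod_univ_succ, Fin.sum_Iio_succ,
      sub_add_eq_sub_sub, this, Finset.sum_empty, sub_zero]

def totalWeight (w : X → ℝ) (S : Finset X) (L : List X) : ℝ := ∑ y ∈ S, w y + (L.map w).sum

lemma totalWeight_cons (w : X → ℝ) (S : Finset X) (x : X) (L : List X) :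
    totalWeight w S (x :: L) = w x + totalWeight w S L := by
  rw [totalWeight, totalWeight, List.map_cons, List.sum_cons, add_left_comm]

lemma totalWeight_nonneg {w : X → ℝ} (hw : ∀ x, 0 ≤ w x) (S : Finset X) (L : List X) :
    0 ≤ totalWeight w S L :=
  add_nonneg (Finset.sum_nonneg fun y _ => hw y) (List.sum_nonneg (by simp [hw]))

lemma totalWeight_cons_pos {w : X → ℝ} (hw : ∀ x, 0 < w x) (S : Finset X) (x : X)
    (L : List X) : 0 < totalWeight w S (x :: L) := by
  rw [totalWeight_cons]
  exact add_pos_of_pos_of_nonneg (hw x) (totalWeight_nonneg (fun y => (hw y).le) S L)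

end Sampling

section GumbelFamily

variable {Ω X : Type*} [MeasurableSpace Ω] {μ : Measure Ω}
  {Y : X → Ω → ℝ} {S : Finset X}

lemma measure_topRanked_cons_eq_lintegral (hY : ∀ x, Measurable (Y x)) (hind : iIndepFun Y μ)
    {x : X} {L : List X} (hxS : x ∉ S) (hxL : x ∉ L) {A : Set ℝ} (hA : MeasurableSet A) :
    μ {ω | TopRanked S (x :: L) A (Y · ω)}
      = ∫⁻ s in A, μ {ω | TopRanked S L (Iio s) (Y · ω)} ∂(μ.map (Y x)) := by
  classical
  have := hind.isProbabilityMeasure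
  set T := S ∪ L.toFinset
  -- the event is a function of `Y x` and of the coordinates in `T`, which are independent of it
  let extend (g : T → ℝ) (z : X) : ℝ := if h : z ∈ T then g ⟨z, h⟩ else 0
  have hextend : Measurable extend := measurable_pi_lambda _ fun z => by
    by_cases h : z ∈ T <;> simp only [extend, h, dite_true, dite_false] <;> fun_prop
  have hrestrict (ω : Ω) (B : Set ℝ) :
      TopRanked S L B (extend fun z => Y z ω) ↔ TopRanked S L B (Y · ω) :=
    topRanked_congr (by simp +contextual [extend, T]) (by simp +contextual [extend, T])
  let C := {q : ℝ × (T → ℝ) | q.1 ∈ A ∧ TopRanked S L (Iio q.1) (extend q.2)}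
  have hC : MeasurableSet C := measurable_fst hA |>.inter <|
    (measurableSet_topRanked S L).preimage (measurable_fst.prodMk (hextend.comp measurable_snd))
  have hevent : {ω | TopRanked S (x :: L) A (Y · ω)}
      = (fun ω => (Y x ω, fun z : T => Y z ω)) ⁻¹' C := by
    ext ω; simp [C, TopRanked, hrestrict]
  have hindep := hind.indepFun_finset_of_notMem hY (i := x) (T := T) (by simp [T, hxS, hxL])
  rw [hevent, hindep.measure_preimage_eq_lintegral (hY x) (measurable_pi_lambda _ fun z => hY z) hC,
    ← lintegral_indicator hA]
  congr with s
  by_cases hs : s ∈ A <;> simp [hs, C, hrestrict]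

variable {w : X → ℝ}

lemma measure_topRanked_nil_Iio (hw : ∀ x, 0 < w x) (hY : ∀ x, Measurable (Y x))
    (hlaw : ∀ x, μ.map (Y x) = gumbelMeasure (w x)) (hind : iIndepFun Y μ) (t : ℝ) :
    μ {ω | TopRanked S [] (Iio t) (Y · ω)} = ENNReal.ofReal (gumbelCDF (∑ y ∈ S, w y) t) := by
  have hevent : {ω | TopRanked S [] (Iio t) (Y · ω)} = ⋂ y ∈ S, Y y ⁻¹' Iio t := by
    ext ω; simp [TopRanked]
  rw [hevent, hind.measure_inter_preimage_eq_mul S fun _ _ => measurableSet_Iio]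
  simp_rw [← Measure.map_apply (hY _) measurableSet_Iio, hlaw, gumbelMeasure_Iio (hw _)]
  rw [← ENNReal.ofReal_prod_of_nonneg fun _ _ => gumbelCDF_nonneg _ _, prod_gumbelCDF]

lemma measure_topRanked_cons (hw : ∀ x, 0 < w x) (hY : ∀ x, Measurable (Y x))
    (hlaw : ∀ x, μ.map (Y x) = gumbelMeasure (w x)) (hind : iIndepFun Y μ) {x : X}
    {L : List X} (hxS : x ∉ S) (hxL : x ∉ L)
    (hL : ∀ t, μ {ω | TopRanked S L (Iio t) (Y · ω)} = ENNReal.ofReal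
      (sworProb w (totalWeight w S L) L * gumbelCDF (totalWeight w S L) t))
    {A : Set ℝ} (hA : MeasurableSet A) :
    μ {ω | TopRanked S (x :: L) A (Y · ω)}
      = ENNReal.ofReal (sworProb w (totalWeight w S (x :: L)) (x :: L))
        * gumbelMeasure (totalWeight w S (x :: L)) A := by
  set T := totalWeight w S L
  have hT : 0 ≤ T := totalWeight_nonneg (fun y => (hw y).le) S L
  simp_rw [measure_topRanked_cons_eq_lintegral hY hind hxS hxL hA, hL, hlaw,
    ENNReal.ofReal_mul' (gumbelCDF_nonneg _ _)]
  rw [lintegral_const_mul _ (by unfold gumbelCDF; fun_prop), totalWeight_cons,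
    setLIntegral_gumbelCDF_gumbelMeasure (hw x) hT hA, ← mul_assoc,
    ← ENNReal.ofReal_mul' (div_nonneg (hw x).le (by linarith [hw x])), sworProb,
    add_sub_cancel_left, mul_comm (sworProb w T L)]

lemma measure_topRanked_Iio (hw : ∀ x, 0 < w x) (hY : ∀ x, Measurable (Y x))
    (hlaw : ∀ x, μ.map (Y x) = gumbelMeasure (w x)) (hind : iIndepFun Y μ) :
    ∀ {L : List X}, L.Nodup → (∀ x ∈ L, x ∉ S) → ∀ t,
      μ {ω | TopRanked S L (Iio t) (Y · ω)} = ENNReal.ofReal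
        (sworProb w (totalWeight w S L) L * gumbelCDF (totalWeight w S L) t)
  | [], _, _, t => by simp [sworProb, totalWeight, measure_topRanked_nil_Iio hw hY hlaw hind]
  | x :: L, hnd, hdisj, t => by
    rw [measure_topRanked_cons hw hY hlaw hind (hdisj x List.mem_cons_self)
      (List.nodup_cons.mp hnd).1 (measure_topRanked_Iio hw hY hlaw hind (List.nodup_cons.mp hnd).2
        fun z hz => hdisj z (List.mem_cons_of_mem x hz)) measurableSet_Iio,
      gumbelMeasure_Iio (totalWeight_cons_pos hw S x L),
      ← ENNReal.ofReal_mul' (gumbelCDF_nonneg _ _)]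

lemma measure_topRanked_univ (hw : ∀ x, 0 < w x) (hY : ∀ x, Measurable (Y x))
    (hlaw : ∀ x, μ.map (Y x) = gumbelMeasure (w x)) (hind : iIndepFun Y μ) {L : List X}
    (hnd : L.Nodup) (hdisj : ∀ x ∈ L, x ∉ S) :
    μ {ω | TopRanked S L univ (Y · ω)} = ENNReal.ofReal (sworProb w (totalWeight w S L) L) := by
  have := hind.isProbabilityMeasure
  cases L with
  | nil => simp [TopRanked, sworProb]
  | cons x L =>
    have := isProbabilityMeasure_gumbelMeasure (totalWeight_cons_pos hw S x L)
    rw [measure_topRanked_cons hw hY hlaw hind (hdisj x List.mem_cons_self)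
      (List.nodup_cons.mp hnd).1 (measure_topRanked_Iio hw hY hlaw hind (List.nodup_cons.mp hnd).2
        fun z hz => hdisj z (List.mem_cons_of_mem x hz)) MeasurableSet.univ, measure_univ, mul_one]

end GumbelFamily

end ProbabilityTheory

theorem gumbel_top_b_swor_general {X Ω : Type*} [Fintype X]
    [MeasurableSpace Ω] (μ : Measure Ω)
    (p : X → ℝ) (hp : IsProbDist p) (hppos : ∀ x, 0 < p x)
    (G : X → Ω → ℝ)
    (hG : ∀ x, IsStdGumbel μ (G x))
    (hindep : ProbabilityTheory.iIndepFun (m := fun _ : X => (inferInstance : MeasurableSpace ℝ))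
      G μ)
    (b : ℕ)
    (xs : Fin b → X) (hxs : Function.Injective xs) :
    (μ {ω |
        (∀ i j : Fin b, i < j →
          Real.log (p (xs j)) + G (xs j) ω < Real.log (p (xs i)) + G (xs i) ω) ∧
        ∀ y : X, (∀ i : Fin b, xs i ≠ y) → ∀ i : Fin b,
          Real.log (p y) + G y ω < Real.log (p (xs i)) + G (xs i) ω}).toReal
      = ∏ i : Fin b, p (xs i) / (1 - ∑ j ∈ Finset.Iio i, p (xs j)) := by
  classical
  have := hindep.isProbabilityMeasure
  set Y : X → Ω → ℝ := fun x ω => log (p x) + G x ω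
  have hY : ∀ x, Measurable (Y x) := fun x => (hG x).1.const_add _
  have hind : iIndepFun Y μ := hindep.comp _ fun x => measurable_id.const_add _
  set S := (Finset.univ.image xs)ᶜ
  have hevent : {ω | (∀ i j : Fin b, i < j → Y (xs j) ω < Y (xs i) ω) ∧
      ∀ y : X, (∀ i : Fin b, xs i ≠ y) → ∀ i : Fin b, Y y ω < Y (xs i) ω}
      = {ω | TopRanked S (List.ofFn xs) univ (Y · ω)} := by
    ext ω; simp [topRanked_univ_iff, List.pairwise_ofFn, S]
  have htotal : totalWeight p S (List.ofFn xs) = 1 := by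
    simp only [totalWeight, List.map_ofFn, List.sum_ofFn, Function.comp_apply]
    rw [← Finset.sum_image fun i _ j _ h => hxs h, Finset.sum_compl_add_sum, hp.2]
  have hS : 0 ≤ ∑ y ∈ S, p y := Finset.sum_nonneg fun y _ => (hppos y).le
  rw [hevent, measure_topRanked_univ hppos hY (fun x => (hG x).map_log_add (hppos x)) hind
    (List.nodup_ofFn.mpr hxs) (by simp [S]), htotal,
    ENNReal.toReal_ofReal (sworProb_nonneg (fun x => (hppos x).le)
      (by unfold totalWeight at htotal; linarith)), sworProb_ofFn]

/-- **Gumbel-Top-b produces samples without replacement:** for pairwise distinct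
`x_1, …, x_b`, the probability that the `b` largest values of `x ↦ log p(x) + G_x` are
attained at `x_1, …, x_b` in strictly decreasing order equals
`∏ᵢ p(x_i) / (1 − Σ_{j < i} p(x_j))`, the law of `b` successive samples drawn without
replacement from `p`. -/
theorem gumbel_top_b_swor {X Ω : Type*} [Fintype X] [Nonempty X]
    [MeasurableSpace Ω] (μ : Measure Ω) [IsProbabilityMeasure μ]
    (p : X → ℝ) (hp : IsProbDist p) (hppos : ∀ x, 0 < p x)
    (G : X → Ω → ℝ)
    (hG : ∀ x, IsStdGumbel μ (G x))
    (hindep : ProbabilityTheory.iIndepFun (m := fun _ : X => (inferInstance : MeasurableSpace ℝ))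
      G μ)
    (b : ℕ) (hb1 : 1 ≤ b) (hb2 : b ≤ Fintype.card X)
    (xs : Fin b → X) (hxs : Function.Injective xs) :
    (μ {ω |
        (∀ i j : Fin b, i < j →
          Real.log (p (xs j)) + G (xs j) ω < Real.log (p (xs i)) + G (xs i) ω) ∧
        ∀ y : X, (∀ i : Fin b, xs i ≠ y) → ∀ i : Fin b,
          Real.log (p y) + G y ω < Real.log (p (xs i)) + G (xs i) ω}).toReal
      = ∏ i : Fin b, p (xs i) / (1 - ∑ j ∈ Finset.Iio i, p (xs j)) :=
  gumbel_top_b_swor_general μ p hp hppos G hG hindep b xs hxs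
end
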